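/- For a smooth family of regular plane curves evolving by $\partial_t\gamma=-E\nu+\lambda\tau$, the curvature evolves by $\partial_t\kappa=-\partial_s^2E-\kappa^2 E+\lambda\,\partial_s\kappa$. -/

import Mathlib

open Set

/-- Euclidean dot product on `ℝ²`. -/
def dot2 (p q : ℝ × ℝ) : ℝ := p.1 * q.1 + p.2 * q.2

/-- Counterclockwise rotation by `π/2`: `R(x,y) = (-y,x)`. -/
def rotCCW (p : ℝ × ℝ) : ℝ × ℝ := (-p.2, p.1)

/-- Speed `|∂ₓ γ|` of the parametrization of the evolving curve. -/
noncomputable def speed (γ : ℝ → ℝ → ℝ × ℝ) (t x : ℝ) : ℝ :=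
  Real.sqrt (dot2 (deriv (γ t) x) (deriv (γ t) x))

/-- Arclength derivative `∂ₛ = |∂ₓγ|⁻¹ ∂ₓ` of a scalar quantity along the evolving curve. -/
noncomputable def Ds (γ : ℝ → ℝ → ℝ × ℝ) (f : ℝ → ℝ → ℝ) (t x : ℝ) : ℝ :=
  (speed γ t x)⁻¹ * deriv (fun y => f t y) x

/-- Arclength derivative of a vector quantity along the evolving curve. -/
noncomputable def DsV (γ : ℝ → ℝ → ℝ × ℝ) (F : ℝ → ℝ → ℝ × ℝ) (t x : ℝ) : ℝ × ℝ :=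
  (speed γ t x)⁻¹ • deriv (fun y => F t y) x

/-- Time derivative (at fixed space parameter) of a scalar quantity. -/
noncomputable def Dt (f : ℝ → ℝ → ℝ) (t x : ℝ) : ℝ :=
  deriv (fun u => f u x) t

/-- Time derivative (at fixed space parameter) of a vector quantity. -/
noncomputable def DtV (F : ℝ → ℝ → ℝ × ℝ) (t x : ℝ) : ℝ × ℝ :=
  deriv (fun u => F u x) t

/-- Unit tangent vector `τ = ∂ₛγ`. -/
noncomputable def tangentV (γ : ℝ → ℝ → ℝ × ℝ) (t x : ℝ) : ℝ × ℝ :=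
  (speed γ t x)⁻¹ • deriv (γ t) x

/-- Unit normal vector `ν = R τ`. -/
noncomputable def normalV (γ : ℝ → ℝ → ℝ × ℝ) (t x : ℝ) : ℝ × ℝ :=
  rotCCW (tangentV γ t x)

section AuxForEvolution
open Function

section Toolkit
variable {f g : ℝ → ℝ × ℝ} {f' g' : ℝ × ℝ} {x : ℝ}

lemma HasDerivAt.dot2' (hf : HasDerivAt f f' x) (hg : HasDerivAt g g' x) :
    HasDerivAt (fun y => dot2 (f y) (g y)) (dot2 f' (g x) + dot2 (f x) g') x := by
  have h1 : HasDerivAt (fun y => (f y).1) f'.1 x := (ContinuousLinearMap.fst ℝ ℝ ℝ).hasFDerivAt.comp_hasDerivAt x hf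
  have h2 : HasDerivAt (fun y => (f y).2) f'.2 x := (ContinuousLinearMap.snd ℝ ℝ ℝ).hasFDerivAt.comp_hasDerivAt x hf
  have h3 : HasDerivAt (fun y => (g y).1) g'.1 x := (ContinuousLinearMap.fst ℝ ℝ ℝ).hasFDerivAt.comp_hasDerivAt x hg
  have h4 : HasDerivAt (fun y => (g y).2) g'.2 x := (ContinuousLinearMap.snd ℝ ℝ ℝ).hasFDerivAt.comp_hasDerivAt x hg
  have := (h1.mul h3).add (h2.mul h4)
  exact this.congr_deriv (by simp only [dot2]; ring)

lemma HasDerivAt.rot (hf : HasDerivAt f f' x) :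
    HasDerivAt (fun y => rotCCW (f y)) (rotCCW f') x := by
  have h1 : HasDerivAt (fun y => (f y).1) f'.1 x := (ContinuousLinearMap.fst ℝ ℝ ℝ).hasFDerivAt.comp_hasDerivAt x hf
  have h2 : HasDerivAt (fun y => (f y).2) f'.2 x := (ContinuousLinearMap.snd ℝ ℝ ℝ).hasFDerivAt.comp_hasDerivAt x hf
  exact h2.neg.prodMk h1

@[simp] lemma dot2_rot_rot (p q : ℝ × ℝ) : dot2 (rotCCW p) (rotCCW q) = dot2 p q := by
  simp [dot2, rotCCW]; ring
@[simp] lemma rot_rot (p : ℝ × ℝ) : rotCCW (rotCCW p) = -p := by simp [rotCCW]; rfl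
@[simp] lemma dot2_rot_self (p : ℝ × ℝ) : dot2 p (rotCCW p) = 0 := by simp [dot2, rotCCW]; ring
lemma dot2_comm (p q : ℝ × ℝ) : dot2 p q = dot2 q p := by simp [dot2]; ring
lemma rot_smul (a : ℝ) (p : ℝ × ℝ) : rotCCW (a • p) = a • rotCCW p := by
  simp [rotCCW, Prod.smul_def, smul_eq_mul, mul_comm]
lemma dot2_smul_left (a : ℝ) (p q : ℝ × ℝ) : dot2 (a • p) q = a * dot2 p q := by
  simp [dot2, Prod.smul_def, smul_eq_mul]; ring
lemma dot2_smul_right (a : ℝ) (p q : ℝ × ℝ) : dot2 p (a • q) = a * dot2 p q := by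
  simp [dot2, Prod.smul_def, smul_eq_mul]; ring
lemma dot2_add_left (p q r : ℝ × ℝ) : dot2 (p + q) r = dot2 p r + dot2 q r := by
  simp [dot2, Prod.fst_add, Prod.snd_add]; ring
lemma dot2_add_right (p q r : ℝ × ℝ) : dot2 p (q + r) = dot2 p q + dot2 p r := by
  simp [dot2, Prod.fst_add, Prod.snd_add]; ring

variable {E' : Type*} [NormedAddCommGroup E'] [NormedSpace ℝ E'] {F G : E' → ℝ × ℝ}
  {p : E'} {n : WithTop ℕ∞}

lemma ContDiffAt.dot2_comp (hf : ContDiffAt ℝ n F p) (hg : ContDiffAt ℝ n G p) :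
    ContDiffAt ℝ n (fun q => dot2 (F q) (G q)) p := by
  show ContDiffAt ℝ n (fun q => (F q).1 * (G q).1 + (F q).2 * (G q).2) p
  exact (hf.fst.mul hg.fst).add (hf.snd.mul hg.snd)

lemma ContDiffAt.rot_comp (hf : ContDiffAt ℝ n F p) :
    ContDiffAt ℝ n (fun q => rotCCW (F q)) p := by
  show ContDiffAt ℝ n (fun q => ((-(F q).2, (F q).1) : ℝ × ℝ)) p
  exact (hf.snd.neg).prodMk hf.fst
end Toolkit

section PDeriv
variable {F : Type*} [NormedAddCommGroup F] [NormedSpace ℝ F]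

noncomputable def pt (f : ℝ → ℝ → F) (t x : ℝ) : F := deriv (fun u => f u x) t
noncomputable def px (f : ℝ → ℝ → F) (t x : ℝ) : F := deriv (fun y => f t y) x

lemma hasDerivAt_pair_right (t x : ℝ) : HasDerivAt (fun y => ((t, y) : ℝ × ℝ)) (0, 1) x :=
  (hasDerivAt_const x t).prodMk (hasDerivAt_id x)

lemma hasDerivAt_pair_left (t x : ℝ) : HasDerivAt (fun u => ((u, x) : ℝ × ℝ)) (1, 0) t :=
  (hasDerivAt_id t).prodMk (hasDerivAt_const t x)

variable {g : ℝ × ℝ → F} {t x : ℝ}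

lemma hasDerivAt_snd_of_diff (hg : DifferentiableAt ℝ g (t, x)) :
    HasDerivAt (fun y => g (t, y)) (fderiv ℝ g (t, x) (0, 1)) x :=
  hg.hasFDerivAt.comp_hasDerivAt x (hasDerivAt_pair_right t x)

lemma hasDerivAt_fst_of_diff (hg : DifferentiableAt ℝ g (t, x)) :
    HasDerivAt (fun u => g (u, x)) (fderiv ℝ g (t, x) (1, 0)) t :=
  hg.hasFDerivAt.comp_hasDerivAt t (hasDerivAt_pair_left t x)

variable {f : ℝ → ℝ → F}

lemma hasDerivAt_px (hf : ∀ p : ℝ × ℝ, ContDiffAt ℝ (⊤ : ℕ∞) (uncurry f) p) (t x : ℝ) :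
    HasDerivAt (fun y => f t y) (px f t x) x := by
  have h := hasDerivAt_snd_of_diff ((hf (t, x)).differentiableAt (by simp))
  have h2 : px f t x = fderiv ℝ (uncurry f) (t, x) (0, 1) := h.deriv
  rw [h2]; exact h

lemma hasDerivAt_pt (hf : ∀ p : ℝ × ℝ, ContDiffAt ℝ (⊤ : ℕ∞) (uncurry f) p) (t x : ℝ) :
    HasDerivAt (fun u => f u x) (pt f t x) t := by
  have h := hasDerivAt_fst_of_diff ((hf (t, x)).differentiableAt (by simp))
  have h2 : pt f t x = fderiv ℝ (uncurry f) (t, x) (1, 0) := h.deriv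
  rw [h2]; exact h

lemma contDiffAt_px (hf : ∀ p : ℝ × ℝ, ContDiffAt ℝ (⊤ : ℕ∞) (uncurry f) p) (p : ℝ × ℝ) :
    ContDiffAt ℝ (⊤ : ℕ∞) (uncurry (px f)) p := by
  have h1 : ∀ q : ℝ × ℝ, uncurry (px f) q = fderiv ℝ (uncurry f) q (0, 1) := fun q =>
    (hasDerivAt_snd_of_diff (t := q.1) (x := q.2) ((hf q).differentiableAt (by simp))).deriv
  have h2 : ContDiffAt ℝ (⊤ : ℕ∞) (fun q : ℝ × ℝ => fderiv ℝ (uncurry f) q (0, 1)) p :=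
    ((hf p).fderiv_right (by simp)).clm_apply contDiffAt_const
  exact h2.congr_of_eventuallyEq (Filter.Eventually.of_forall h1)

lemma pt_px_comm (hf : ∀ p : ℝ × ℝ, ContDiffAt ℝ (⊤ : ℕ∞) (uncurry f) p) (t x : ℝ) :
    pt (px f) t x = px (pt f) t x := by
  set g := uncurry f with hg
  have hdiff : ∀ q : ℝ × ℝ, DifferentiableAt ℝ g q := fun q => (hf q).differentiableAt (by simp)
  have hF2 : ∀ q : ℝ × ℝ, DifferentiableAt ℝ (fderiv ℝ g) q := fun q =>
    ((hf q).fderiv_right (m := 1) (by exact WithTop.coe_le_coe.mpr le_top)).differentiableAt (by simp)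
  have e1 : ∀ u, px f u x = fderiv ℝ g (u, x) (0, 1) := fun u =>
    (hasDerivAt_snd_of_diff (hdiff (u, x))).deriv
  have l1 : HasDerivAt (fun u => fderiv ℝ g (u, x) (0, 1))
      (fderiv ℝ (fderiv ℝ g) (t, x) (1, 0) (0, 1)) t := by
    have := (hasDerivAt_fst_of_diff (g := fderiv ℝ g) (hF2 (t, x))).clm_apply
      (hasDerivAt_const t ((0, 1) : ℝ × ℝ))
    simpa using this
  have L : pt (px f) t x = fderiv ℝ (fderiv ℝ g) (t, x) (1, 0) (0, 1) := by
    have h : (fun u => px f u x) = fun u => fderiv ℝ g (u, x) (0, 1) := funext e1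
    rw [pt, h]; exact l1.deriv
  have e2 : ∀ y, pt f t y = fderiv ℝ g (t, y) (1, 0) := fun y =>
    (hasDerivAt_fst_of_diff (hdiff (t, y))).deriv
  have l2 : HasDerivAt (fun y => fderiv ℝ g (t, y) (1, 0))
      (fderiv ℝ (fderiv ℝ g) (t, x) (0, 1) (1, 0)) x := by
    have := (hasDerivAt_snd_of_diff (g := fderiv ℝ g) (hF2 (t, x))).clm_apply
      (hasDerivAt_const x ((1, 0) : ℝ × ℝ))
    simpa using this
  have R : px (pt f) t x = fderiv ℝ (fderiv ℝ g) (t, x) (0, 1) (1, 0) := by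
    have h : (fun y => pt f t y) = fun y => fderiv ℝ g (t, y) (1, 0) := funext e2
    rw [px, h]; exact l2.deriv
  rw [L, R]
  exact ((hf (t, x)).isSymmSndFDerivAt (by simp; exact WithTop.coe_le_coe.mpr le_top)).eq (1, 0) (0, 1)
end PDeriv

section Geometry
variable {γ : ℝ → ℝ → ℝ × ℝ} {κ E lam : ℝ → ℝ → ℝ}

theorem evolution_curvature'
    (hγ : ContDiff ℝ (⊤ : ℕ∞) (Function.uncurry γ))
    (hκs : ContDiff ℝ (⊤ : ℕ∞) (Function.uncurry κ))
    (hEs : ContDiff ℝ (⊤ : ℕ∞) (Function.uncurry E))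
    (hlams : ContDiff ℝ (⊤ : ℕ∞) (Function.uncurry lam))
    (hreg : ∀ t x, 0 < speed γ t x)
    (hκ : ∀ t x, DsV γ (tangentV γ) t x = κ t x • normalV γ t x)
    (hev : ∀ t x, deriv (fun u => γ u x) t
      = -E t x • normalV γ t x + lam t x • tangentV γ t x) :
    ∀ t x, Dt κ t x
      = -(Ds γ (Ds γ E) t x) - (κ t x) ^ 2 * E t x + lam t x * Ds γ κ t x := by
  have hγc : ∀ p : ℝ × ℝ, ContDiffAt ℝ (⊤ : ℕ∞) (uncurry γ) p := fun p => hγ.contDiffAt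
  have hκc : ∀ p : ℝ × ℝ, ContDiffAt ℝ (⊤ : ℕ∞) (uncurry κ) p := fun p => hκs.contDiffAt
  have hEc : ∀ p : ℝ × ℝ, ContDiffAt ℝ (⊤ : ℕ∞) (uncurry E) p := fun p => hEs.contDiffAt
  have hlamc : ∀ p : ℝ × ℝ, ContDiffAt ℝ (⊤ : ℕ∞) (uncurry lam) p := fun p => hlams.contDiffAt
  have hVc : ∀ p : ℝ × ℝ, ContDiffAt ℝ (⊤ : ℕ∞) (uncurry (px γ)) p := contDiffAt_px hγc
  have sne : ∀ t x, speed γ t x ≠ 0 := fun t x => ne_of_gt (hreg t x)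
  have hdpos : ∀ t x, 0 < dot2 (px γ t x) (px γ t x) := by
    intro t x
    have h := hreg t x
    rw [speed] at h
    exact Real.sqrt_pos.mp h
  have hsc : ∀ p : ℝ × ℝ, ContDiffAt ℝ (⊤ : ℕ∞) (uncurry (speed γ)) p := by
    intro p
    have h1 : ContDiffAt ℝ (⊤ : ℕ∞) (fun q : ℝ × ℝ => dot2 (uncurry (px γ) q) (uncurry (px γ) q)) p :=
      (hVc p).dot2_comp (hVc p)
    exact (Real.contDiffAt_sqrt (ne_of_gt (hdpos p.1 p.2))).comp p h1
  have hTc : ∀ p : ℝ × ℝ, ContDiffAt ℝ (⊤ : ℕ∞) (uncurry (tangentV γ)) p := by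
    intro p
    exact ((hsc p).inv (sne p.1 p.2)).smul (hVc p)
  have hNc : ∀ p : ℝ × ℝ, ContDiffAt ℝ (⊤ : ℕ∞) (uncurry (normalV γ)) p := fun p => (hTc p).rot_comp
  have hsq : ∀ t x, speed γ t x * speed γ t x = dot2 (px γ t x) (px γ t x) := fun t x =>
    Real.mul_self_sqrt (le_of_lt (hdpos t x))
  have hTT : ∀ t x, dot2 (tangentV γ t x) (tangentV γ t x) = 1 := by
    intro t x
    rw [tangentV, dot2_smul_left, dot2_smul_right]
    show (speed γ t x)⁻¹ * ((speed γ t x)⁻¹ * dot2 (px γ t x) (px γ t x)) = 1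
    rw [← hsq t x]
    field_simp
    exact div_self (sne t x)
  have hTN : ∀ t x, dot2 (tangentV γ t x) (normalV γ t x) = 0 := fun t x => dot2_rot_self _
  have hNT : ∀ t x, dot2 (normalV γ t x) (tangentV γ t x) = 0 := by
    intro t x; rw [dot2_comm]; exact hTN t x
  have hNN : ∀ t x, dot2 (normalV γ t x) (normalV γ t x) = 1 := by
    intro t x; rw [normalV, dot2_rot_rot]; exact hTT t x
  have hrotN : ∀ t x, rotCCW (normalV γ t x) = -(tangentV γ t x) := by
    intro t x; rw [normalV, rot_rot]
  have hVT : ∀ t x, px γ t x = speed γ t x • tangentV γ t x := by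
    intro t x
    rw [tangentV, smul_smul, mul_inv_cancel₀ (sne t x), one_smul]
    rfl
  -- the curvature identity: ∂ₓT = (sκ) • N
  have hκ' : ∀ t x, px (tangentV γ) t x = (speed γ t x * κ t x) • normalV γ t x := by
    intro t x
    have h := hκ t x
    rw [DsV] at h
    have h2 := congrArg (fun v : ℝ × ℝ => speed γ t x • v) h
    simp only [smul_smul] at h2
    rw [mul_inv_cancel₀ (sne t x), one_smul] at h2
    exact h2
  -- ∂ₓN = -(sκ) • T
  have hNx : ∀ t x, px (normalV γ) t x = -(speed γ t x * κ t x) • tangentV γ t x := by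
    intro t x
    have h : px (normalV γ) t x = rotCCW (px (tangentV γ) t x) :=
      ((hasDerivAt_px hTc t x).rot).deriv
    rw [h, hκ' t x, rot_smul, hrotN t x, smul_neg, neg_smul]
  -- ∂ₜ∂ₓγ via Clairaut and the evolution equation
  have hVt : ∀ t x, pt (px γ) t x
      = (E t x * speed γ t x * κ t x + px lam t x) • tangentV γ t x
        + (lam t x * speed γ t x * κ t x - px E t x) • normalV γ t x := by
    intro t x
    rw [pt_px_comm hγc t x]
    have heq : (fun y => pt γ t y)
        = fun y => -E t y • normalV γ t y + lam t y • tangentV γ t y := funext fun y => hev t y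
    have hd : HasDerivAt (fun y => -E t y • normalV γ t y + lam t y • tangentV γ t y)
        ((-E t x • px (normalV γ) t x + -(px E t x) • normalV γ t x)
          + (lam t x • px (tangentV γ) t x + px lam t x • tangentV γ t x)) x :=
      (((hasDerivAt_px hEc t x).neg.smul (hasDerivAt_px hNc t x)).add
        ((hasDerivAt_px hlamc t x).smul (hasDerivAt_px hTc t x)))
    have h2 : px (pt γ) t x
        = (-E t x • px (normalV γ) t x + -(px E t x) • normalV γ t x)
          + (lam t x • px (tangentV γ) t x + px lam t x • tangentV γ t x) := by
      rw [px, heq]; exact hd.deriv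
    rw [h2, hκ' t x, hNx t x]
    module
  -- ∂ₜ s
  have hst : ∀ t x, pt (speed γ) t x = E t x * speed γ t x * κ t x + px lam t x := by
    intro t x
    have hV' : HasDerivAt (fun u => px γ u x) (pt (px γ) t x) t := hasDerivAt_pt hVc t x
    have hdd : HasDerivAt (fun u => dot2 (px γ u x) (px γ u x))
        (dot2 (pt (px γ) t x) (px γ t x) + dot2 (px γ t x) (pt (px γ) t x)) t := hV'.dot2' hV'
    have hsqrt := (Real.hasDerivAt_sqrt (ne_of_gt (hdpos t x))).comp t hdd
    have h1 : pt (speed γ) t x = 1 / (2 * Real.sqrt (dot2 (px γ t x) (px γ t x)))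
        * (dot2 (pt (px γ) t x) (px γ t x) + dot2 (px γ t x) (pt (px γ) t x)) := hsqrt.deriv
    have hss : Real.sqrt (dot2 (px γ t x) (px γ t x)) = speed γ t x := rfl
    rw [h1, hss, hVt t x, hVT t x]
    simp only [dot2_add_left, dot2_add_right, dot2_smul_left, dot2_smul_right,
      hTT t x, hNT t x, hTN t x]
    have := sne t x
    field_simp
    ring
  -- ∂ₜ T
  have hTt : ∀ t x, pt (tangentV γ) t x
      = (lam t x * κ t x - Ds γ E t x) • normalV γ t x := by
    intro t x
    have h1 : HasDerivAt (fun u => (speed γ u x)⁻¹ • px γ u x)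
        ((speed γ t x)⁻¹ • pt (px γ) t x
          + (-(pt (speed γ) t x) / (speed γ t x) ^ 2) • px γ t x) t :=
      (((hasDerivAt_pt hsc t x).inv (sne t x)).smul (hasDerivAt_pt hVc t x))
    have h2 : pt (tangentV γ) t x = _ := h1.deriv
    rw [h2, hVt t x, hst t x, hVT t x]
    have hDsE : Ds γ E t x = (speed γ t x)⁻¹ * px E t x := rfl
    rw [hDsE]
    have hs0 := sne t x
    match_scalars
    · field_simp
      ring
    · field_simp
  -- ∂ₜ N
  have hNt : ∀ t x, pt (normalV γ) t x
      = -(lam t x * κ t x - Ds γ E t x) • tangentV γ t x := by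
    intro t x
    have h : pt (normalV γ) t x = rotCCW (pt (tangentV γ) t x) :=
      ((hasDerivAt_pt hTc t x).rot).deriv
    rw [h, hTt t x, rot_smul, hrotN t x, smul_neg, neg_smul]
  -- main computation
  intro t x
  have hTxc : ∀ p : ℝ × ℝ, ContDiffAt ℝ (⊤ : ℕ∞) (uncurry (px (tangentV γ))) p := contDiffAt_px hTc
  have hBc : ∀ p : ℝ × ℝ, ContDiffAt ℝ (⊤ : ℕ∞) (uncurry (Ds γ E)) p := by
    intro p
    exact ((hsc p).inv (sne p.1 p.2)).mul (contDiffAt_px hEc p)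
  -- ∂ₓ(∂ₜT)
  have hAd : HasDerivAt (fun y => (lam t y * κ t y - Ds γ E t y) • normalV γ t y)
      ((lam t x * κ t x - Ds γ E t x) • px (normalV γ) t x
        + (px lam t x * κ t x + lam t x * px κ t x - px (Ds γ E) t x) • normalV γ t x) x := by
    have h1 : HasDerivAt (fun y => lam t y * κ t y - Ds γ E t y)
        (px lam t x * κ t x + lam t x * px κ t x - px (Ds γ E) t x) x :=
      (((hasDerivAt_px hlamc t x).mul (hasDerivAt_px hκc t x)).sub (hasDerivAt_px hBc t x))
    exact h1.smul (hasDerivAt_px hNc t x)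
  have hpxptT : px (pt (tangentV γ)) t x
      = (lam t x * κ t x - Ds γ E t x) • px (normalV γ) t x
        + (px lam t x * κ t x + lam t x * px κ t x - px (Ds γ E) t x) • normalV γ t x := by
    have h : (fun y => pt (tangentV γ) t y)
        = fun y => (lam t y * κ t y - Ds γ E t y) • normalV γ t y := funext fun y => hTt t y
    rw [px, h]
    exact hAd.deriv
  -- differentiate sκ = ⟨∂ₓT, N⟩ in time
  have key : pt (speed γ) t x * κ t x + speed γ t x * pt κ t x
      = px lam t x * κ t x + lam t x * px κ t x - px (Ds γ E) t x := by
    have hfun : (fun u => speed γ u x * κ u x)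
        = fun u => dot2 (px (tangentV γ) u x) (normalV γ u x) := by
      funext u
      rw [hκ' u x, dot2_smul_left, hNN u x, mul_one]
    have hL : HasDerivAt (fun u => speed γ u x * κ u x)
        (pt (speed γ) t x * κ t x + speed γ t x * pt κ t x) t :=
      (hasDerivAt_pt hsc t x).mul (hasDerivAt_pt hκc t x)
    have hR : HasDerivAt (fun u => dot2 (px (tangentV γ) u x) (normalV γ u x))
        (dot2 (pt (px (tangentV γ)) t x) (normalV γ t x)
          + dot2 (px (tangentV γ) t x) (pt (normalV γ) t x)) t :=
      (hasDerivAt_pt hTxc t x).dot2' (hasDerivAt_pt hNc t x)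
    rw [← hfun] at hR
    have huniq := hL.unique hR
    rw [huniq, pt_px_comm hTc t x, hpxptT, hκ' t x, hNt t x, hNx t x]
    simp only [dot2_add_left, dot2_add_right, dot2_smul_left, dot2_smul_right,
      hNN t x, hNT t x, hTN t x]
    ring
  -- conclude
  rw [hst t x] at key
  show pt κ t x = -((speed γ t x)⁻¹ * px (Ds γ E) t x) - κ t x ^ 2 * E t x
      + lam t x * ((speed γ t x)⁻¹ * px κ t x)
  have hs0 := sne t x
  field_simp
  linear_combination key
end Geometry

end AuxForEvolution

/-- **Evolution of the curvature.** For a smooth family of regular plane curves evolving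
by `∂ₜγ = -E ν + λ τ`, the curvature evolves by `∂ₜκ = -∂ₛ²E - κ²E + λ ∂ₛκ`. -/
theorem evolution_curvature
    (γ : ℝ → ℝ → ℝ × ℝ) (κ E lam : ℝ → ℝ → ℝ)
    (hγ : ContDiff ℝ (⊤ : ℕ∞) (Function.uncurry γ))
    (hκs : ContDiff ℝ (⊤ : ℕ∞) (Function.uncurry κ))
    (hEs : ContDiff ℝ (⊤ : ℕ∞) (Function.uncurry E))
    (hlams : ContDiff ℝ (⊤ : ℕ∞) (Function.uncurry lam))
    (hreg : ∀ t x, 0 < speed γ t x)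
    (hκ : ∀ t x, DsV γ (tangentV γ) t x = κ t x • normalV γ t x)
    (hev : ∀ t x, deriv (fun u => γ u x) t
      = -E t x • normalV γ t x + lam t x • tangentV γ t x) :
    ∀ t x, Dt κ t x
      = -(Ds γ (Ds γ E) t x) - (κ t x) ^ 2 * E t x + lam t x * Ds γ κ t x :=
  evolution_curvature' hγ hκs hEs hlams hreg hκ hev
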